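/- Let n ≥ 2 and let A = (a_{ij}) be the adjacency matrix of a strongly connected simple digraph on n vertices, i.e., an n×n 0-1 matrix with zero diagonal that is irreducible. Let d_i^+ = Σ_j a_{ij} be the out-degree of vertex v_i and m_i^+ = (Σ_{j : a_{ij}=1} d_j^+)/d_i^+ the average out-degree of the out-neighbors of v_i. Then min{ sqrt(m_i^+ m_j^+) : a_{ij} = 1 } ≤ ρ(A) ≤ max{ sqrt(m_i^+ m_j^+) : a_{ij} = 1 }, where ρ(A) is the spectral radius of A. Moreover, equality holds in either bound if and only if one of the following holds: (i) m_1^+ = m_2^+ = … = m_n^+; (ii) the vertex set can be partitioned into two nonempty parts with a_{ij} = 0 whenever i,j lie in the same part (the digraph is bipartite), and vertices of the same part have the same average out-degree m_i^+. -/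

import Mathlib

open Matrix

/-- The spectral radius of a real square matrix: the largest modulus of its
complex eigenvalues. -/
noncomputable def specRad {n : ℕ} (M : Matrix (Fin n) (Fin n) ℝ) : ℝ :=
  sSup {x : ℝ | ∃ μ : ℂ, μ ∈ spectrum ℂ (M.map Complex.ofReal) ∧ x = ‖μ‖}

/-- A square matrix is irreducible if for every pair of indices `(i, j)` there is a
positive power `k` with `(A ^ k) i j > 0`. -/
def MatIrred {n : ℕ} (M : Matrix (Fin n) (Fin n) ℝ) : Prop :=
  ∀ i j, ∃ k : ℕ, 0 < k ∧ 0 < (M ^ k) i j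

open scoped NNReal ENNReal

variable {n : ℕ}


lemma spec_iff {M : Matrix (Fin n) (Fin n) ℂ} {μ : ℂ} :
    μ ∈ spectrum ℂ M ↔ ∃ v : Fin n → ℂ, v ≠ 0 ∧ M *ᵥ v = μ • v := by
  rw [← AlgEquiv.spectrum_eq (Matrix.toLinAlgEquiv' (n := Fin n) (R := ℂ)) M,
    ← Module.End.hasEigenvalue_iff_mem_spectrum]
  constructor
  · intro h
    obtain ⟨v, hv⟩ := h.exists_hasEigenvector
    exact ⟨v, hv.2, by simpa [Matrix.toLinAlgEquiv'_apply] using hv.apply_eq_smul⟩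
  · rintro ⟨v, hv0, hv⟩
    exact Module.End.hasEigenvalue_of_hasEigenvector
      ⟨Module.End.mem_eigenspace_iff.2 (by simpa [Matrix.toLinAlgEquiv'_apply] using hv), hv0⟩


lemma spectrum_finite (M : Matrix (Fin n) (Fin n) ℂ) : (spectrum ℂ M).Finite := by
  rw [← AlgEquiv.spectrum_eq (Matrix.toLinAlgEquiv' (n := Fin n) (R := ℂ)) M]
  have : spectrum ℂ (Matrix.toLinAlgEquiv' M) = {μ | Module.End.HasEigenvalue (Matrix.toLinAlgEquiv' M) μ} := by
    ext μ; exact (Module.End.hasEigenvalue_iff_mem_spectrum).symm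
  rw [this]
  exact Module.End.finite_hasEigenvalue _

lemma spectrum_nonempty (hn : 0 < n) (M : Matrix (Fin n) (Fin n) ℂ) :
    (spectrum ℂ M).Nonempty := by
  haveI : Nonempty (Fin n) := ⟨⟨0, hn⟩⟩
  exact spectrum.nonempty_of_isAlgClosed_of_finiteDimensional ℂ M

lemma specSet_eq (A : Matrix (Fin n) (Fin n) ℝ) :
    {x : ℝ | ∃ μ : ℂ, μ ∈ spectrum ℂ (A.map Complex.ofReal) ∧ x = ‖μ‖}
      = (fun μ : ℂ => ‖μ‖) '' (spectrum ℂ (A.map Complex.ofReal)) := by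
  ext x; constructor
  · rintro ⟨μ, hμ, rfl⟩; exact ⟨μ, hμ, rfl⟩
  · rintro ⟨μ, hμ, rfl⟩; exact ⟨μ, hμ, rfl⟩

lemma specSet_finite (A : Matrix (Fin n) (Fin n) ℝ) :
    Set.Finite {x : ℝ | ∃ μ : ℂ, μ ∈ spectrum ℂ (A.map Complex.ofReal) ∧ x = ‖μ‖} := by
  rw [specSet_eq]; exact (spectrum_finite _).image _

lemma specSet_nonempty (hn : 0 < n) (A : Matrix (Fin n) (Fin n) ℝ) :
    Set.Nonempty {x : ℝ | ∃ μ : ℂ, μ ∈ spectrum ℂ (A.map Complex.ofReal) ∧ x = ‖μ‖} := by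
  obtain ⟨μ, hμ⟩ := spectrum_nonempty hn (A.map Complex.ofReal)
  exact ⟨‖μ‖, μ, hμ, rfl⟩

lemma specRad_mem (hn : 0 < n) (A : Matrix (Fin n) (Fin n) ℝ) :
    ∃ μ : ℂ, μ ∈ spectrum ℂ (A.map Complex.ofReal) ∧ specRad A = ‖μ‖ :=
  (specSet_nonempty hn A).csSup_mem (specSet_finite A)

lemma abs_le_specRad {A : Matrix (Fin n) (Fin n) ℝ} {μ : ℂ}
    (hμ : μ ∈ spectrum ℂ (A.map Complex.ofReal)) : ‖μ‖ ≤ specRad A :=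
  le_csSup (specSet_finite A).bddAbove ⟨μ, hμ, rfl⟩

lemma map_mulVec_ofReal (A : Matrix (Fin n) (Fin n) ℝ) (x : Fin n → ℝ) :
    (A.map Complex.ofReal) *ᵥ (fun i => (x i : ℂ)) = fun i => ((A *ᵥ x) i : ℂ) := by
  funext i
  simp [Matrix.mulVec, dotProduct, Matrix.map_apply]

section Norms

attribute [local instance] Matrix.linftyOpNormedRing Matrix.linftyOpNormedAlgebra

lemma map_ofReal_pow (A : Matrix (Fin n) (Fin n) ℝ) (k : ℕ) :
    (A.map Complex.ofReal) ^ k = (A ^ k).map Complex.ofReal := by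
  have h : ∀ M : Matrix (Fin n) (Fin n) ℝ, M.map Complex.ofReal
      = Complex.ofRealHom.mapMatrix M := fun M => rfl
  rw [h, h, ← map_pow]

lemma rowsum_le_norm (M : Matrix (Fin n) (Fin n) ℝ) (i : Fin n) :
    ∑ j, |M i j| ≤ ‖M.map Complex.ofReal‖ := by
  have h1 : (∑ j, ‖(M.map Complex.ofReal) i j‖₊ : ℝ≥0) ≤ ‖M.map Complex.ofReal‖₊ := by
    rw [linfty_opNNNorm_def]
    exact Finset.le_sup (f := fun i => ∑ j, ‖(M.map Complex.ofReal) i j‖₊) (Finset.mem_univ i)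
  calc ∑ j, |M i j| = ((∑ j, ‖(M.map Complex.ofReal) i j‖₊ : ℝ≥0) : ℝ) := by
        push_cast
        refine Finset.sum_congr rfl fun j _ => ?_
        simp [Matrix.map_apply, Complex.norm_real]
    _ ≤ ‖M.map Complex.ofReal‖ := by exact_mod_cast h1

lemma spectralRadius_eq (hn : 0 < n) (A : Matrix (Fin n) (Fin n) ℝ) :
    spectralRadius ℂ (A.map Complex.ofReal) = ENNReal.ofReal (specRad A) := by
  apply le_antisymm
  · rw [spectralRadius]
    refine iSup₂_le fun μ hμ => ?_
    rw [← ENNReal.ofReal_coe_nnreal, coe_nnnorm]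
    exact ENNReal.ofReal_le_ofReal (abs_le_specRad hμ)
  · obtain ⟨μ, hμ, h⟩ := specRad_mem hn A
    rw [h, ← coe_nnnorm, ENNReal.ofReal_coe_nnreal, spectralRadius]
    exact le_iSup₂ (f := fun (k : ℂ) (_ : k ∈ spectrum ℂ (A.map Complex.ofReal)) => (‖k‖₊ : ℝ≥0∞)) μ hμ

lemma tendsto_norm_pow (hn : 0 < n) (A : Matrix (Fin n) (Fin n) ℝ) :
    Filter.Tendsto (fun k : ℕ => ‖(A ^ k).map Complex.ofReal‖ ^ (1 / (k : ℝ)))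
      Filter.atTop (nhds (specRad A)) := by
  have h := spectrum.pow_nnnorm_pow_one_div_tendsto_nhds_spectralRadius (A.map Complex.ofReal)
  rw [spectralRadius_eq hn A] at h
  have hne : ENNReal.ofReal (specRad A) ≠ ⊤ := ENNReal.ofReal_ne_top
  have h2 := (ENNReal.tendsto_toReal hne).comp h
  have hr : specRad A = (ENNReal.ofReal (specRad A)).toReal := by
    rw [ENNReal.toReal_ofReal]
    obtain ⟨μ, _, hμ⟩ := specRad_mem hn A
    rw [hμ]; positivity
  rw [← hr] at h2
  convert h2 using 2 with k
  simp only [Function.comp_apply]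
  rw [map_ofReal_pow]
  rw [← ENNReal.toReal_rpow, ENNReal.coe_toReal, coe_nnnorm]
lemma pow_nonneg_entries {A : Matrix (Fin n) (Fin n) ℝ} (hA : ∀ i j, 0 ≤ A i j) (k : ℕ) :
    ∀ i j, 0 ≤ (A ^ k) i j := by
  induction k with
  | zero => intro i j; by_cases h : i = j <;> simp [pow_zero, Matrix.one_apply, h]
  | succ k ih =>
    intro i j
    rw [pow_succ, Matrix.mul_apply]
    exact Finset.sum_nonneg fun l _ => mul_nonneg (ih i l) (hA l j)

lemma cw_upper (hn : 0 < n) {A : Matrix (Fin n) (Fin n) ℝ} (hA : ∀ i j, 0 ≤ A i j)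
    {u : Fin n → ℝ} (hu : ∀ i, 0 < u i) {lam : ℝ} (hlam : 0 ≤ lam)
    (h : ∀ i, lam * u i ≤ (A *ᵥ u) i) : lam ≤ specRad A := by
  have key : ∀ k : ℕ, ∀ i, lam ^ k * u i ≤ ((A ^ k) *ᵥ u) i := by
    intro k
    induction k with
    | zero => intro i; simp [Matrix.one_mulVec]
    | succ k ih =>
      intro i
      have h1 : ((A ^ (k+1)) *ᵥ u) i = ((A ^ k) *ᵥ (A *ᵥ u)) i := by
        rw [Matrix.mulVec_mulVec, ← pow_succ]
      rw [h1]
      have h2 : ((A ^ k) *ᵥ (fun j => lam * u j)) i ≤ ((A ^ k) *ᵥ (A *ᵥ u)) i := by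
        simp only [Matrix.mulVec, dotProduct]
        exact Finset.sum_le_sum fun j _ =>
          mul_le_mul_of_nonneg_left (h j) (pow_nonneg_entries hA k i j)
      refine le_trans ?_ h2
      simp only [Matrix.mulVec, dotProduct]
      calc lam ^ (k+1) * u i = lam * (lam ^ k * u i) := by ring
        _ ≤ lam * (∑ j, (A ^ k) i j * u j) := by
            exact mul_le_mul_of_nonneg_left (by simpa [Matrix.mulVec, dotProduct] using ih i) hlam
        _ = ∑ j, (A ^ k) i j * (lam * u j) := by rw [Finset.mul_sum]; congr 1; funext j; ring
  set i₀ : Fin n := ⟨0, hn⟩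
  set U : ℝ := ∑ j, u j with hU
  have hUpos : 0 < U := Finset.sum_pos (fun j _ => hu j) ⟨i₀, Finset.mem_univ _⟩
  have huleU : ∀ j, u j ≤ U := fun j =>
    Finset.single_le_sum (f := u) (fun l _ => (hu l).le) (Finset.mem_univ j)
  set C : ℝ := U / u i₀ with hC
  have hCpos : 0 < C := div_pos hUpos (hu i₀)
  have hbound : ∀ k : ℕ, lam ^ k ≤ C * ‖(A ^ k).map Complex.ofReal‖ := by
    intro k
    have h1 : lam ^ k * u i₀ ≤ ∑ j, (A ^ k) i₀ j * u j := by
      simpa [Matrix.mulVec, dotProduct] using key k i₀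
    have h2 : ∑ j, (A ^ k) i₀ j * u j ≤ (∑ j, (A ^ k) i₀ j) * U := by
      rw [Finset.sum_mul]
      exact Finset.sum_le_sum fun j _ =>
        mul_le_mul_of_nonneg_left (huleU j) (pow_nonneg_entries hA k i₀ j)
    have h3 : (∑ j, (A ^ k) i₀ j) ≤ ‖(A ^ k).map Complex.ofReal‖ := by
      refine le_trans (le_of_eq ?_) (rowsum_le_norm (A ^ k) i₀)
      exact Finset.sum_congr rfl fun j _ => (abs_of_nonneg (pow_nonneg_entries hA k i₀ j)).symm
    have h4 : lam ^ k * u i₀ ≤ ‖(A ^ k).map Complex.ofReal‖ * U :=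
      le_trans (le_trans h1 h2) (mul_le_mul_of_nonneg_right h3 hUpos.le)
    have h5 : C * ‖(A ^ k).map Complex.ofReal‖ = ‖(A ^ k).map Complex.ofReal‖ * U / u i₀ := by
      rw [hC]; ring
    rw [h5, le_div_iff₀ (hu i₀)]
    exact h4
  have hevent : ∀ k : ℕ, 1 ≤ k → lam ≤ C ^ (1/(k:ℝ)) * ‖(A ^ k).map Complex.ofReal‖ ^ (1/(k:ℝ)) := by
    intro k hk
    have hk0 : (k:ℝ) ≠ 0 := Nat.cast_ne_zero.2 (by omega)
    have h6 : (lam ^ k) ^ (1/(k:ℝ)) ≤ (C * ‖(A ^ k).map Complex.ofReal‖) ^ (1/(k:ℝ)) :=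
      Real.rpow_le_rpow (pow_nonneg hlam k) (hbound k) (by positivity)
    have h7 : (lam ^ k : ℝ) ^ (1/(k:ℝ)) = lam := by
      rw [← Real.rpow_natCast lam k, ← Real.rpow_mul hlam]
      rw [mul_one_div, div_self hk0, Real.rpow_one]
    rw [h7] at h6
    rwa [Real.mul_rpow hCpos.le (norm_nonneg _)] at h6
  have hexp : ∀ k : ℕ, C ^ (1/(k:ℝ)) = Real.exp ((1/(k:ℝ)) * Real.log C) := fun k => by
    rw [Real.rpow_def_of_pos hCpos, mul_comm]
  have hC1 : Filter.Tendsto (fun k : ℕ => C ^ (1/(k:ℝ))) Filter.atTop (nhds 1) := by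
    have hlog : Filter.Tendsto (fun k : ℕ => (1/(k:ℝ)) * Real.log C) Filter.atTop (nhds 0) := by
      simpa using (tendsto_one_div_atTop_nhds_zero_nat.mul_const (Real.log C))
    have h8 := (Real.continuous_exp.tendsto 0).comp hlog
    simp only [Function.comp_def, Real.exp_zero] at h8
    simpa only [hexp] using h8
  have hmul := hC1.mul (tendsto_norm_pow hn A)
  rw [one_mul] at hmul
  exact ge_of_tendsto hmul (Filter.eventually_atTop.2 ⟨1, hevent⟩)
lemma exists_posB {A : Matrix (Fin n) (Fin n) ℝ} (hA : ∀ i j, 0 ≤ A i j) (hirr : MatIrred A) :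
    ∃ B : Matrix (Fin n) (Fin n) ℝ, (∀ i j, 0 < B i j) ∧ A * B = B * A := by
  choose k hk1 hk2 using hirr
  set K : ℕ := Finset.univ.sup (fun p : Fin n × Fin n => k p.1 p.2) with hK
  refine ⟨∑ m ∈ Finset.range (K+1), A ^ m, ?_, ?_⟩
  · intro i j
    have hkK : k i j ≤ K := Finset.le_sup (f := fun p : Fin n × Fin n => k p.1 p.2)
      (Finset.mem_univ (i, j))
    have hmem : k i j ∈ Finset.range (K+1) := Finset.mem_range.2 (by omega)
    have he : (∑ m ∈ Finset.range (K+1), A ^ m) i j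
        = ∑ m ∈ Finset.range (K+1), (A ^ m) i j := by
      simp [Matrix.sum_apply]
    rw [he]
    exact Finset.sum_pos' (fun m _ => pow_nonneg_entries hA m i j) ⟨k i j, hmem, hk2 i j⟩
  · rw [Finset.mul_sum, Finset.sum_mul]
    exact Finset.sum_congr rfl fun m _ => ((Commute.refl A).pow_right m).eq

lemma perron (hn : 0 < n) {A : Matrix (Fin n) (Fin n) ℝ} (hA : ∀ i j, 0 ≤ A i j)
    (hirr : MatIrred A) :
    ∃ u : Fin n → ℝ, (∀ i, 0 < u i) ∧ A *ᵥ u = specRad A • u := by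
  obtain ⟨μ, hμ, hμr⟩ := specRad_mem hn A
  set r := specRad A with hrdef
  have hr0 : 0 ≤ r := by rw [hμr]; positivity
  obtain ⟨v, hv0, hveq⟩ := spec_iff.1 hμ
  set z : Fin n → ℝ := fun i => ‖v i‖ with hz
  obtain ⟨j₀, hj₀⟩ : ∃ j, v j ≠ 0 := Function.ne_iff.1 hv0
  have hzj₀ : 0 < z j₀ := norm_pos_iff.2 hj₀
  have hznn : ∀ i, 0 ≤ z i := fun i => norm_nonneg _
  have hsub : ∀ i, r * z i ≤ (A *ᵥ z) i := by
    intro i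
    have h1 : ((A.map Complex.ofReal) *ᵥ v) i = ∑ j, (A i j : ℂ) * v j := by
      simp [Matrix.mulVec, dotProduct, Matrix.map_apply]
    have h2 : r * z i = ‖∑ j, (A i j : ℂ) * v j‖ := by
      rw [← h1, hveq]
      show r * z i = ‖μ * v i‖
      rw [hμr, norm_mul]
    rw [h2]
    refine le_trans (norm_sum_le _ _) ?_
    simp only [Matrix.mulVec, dotProduct]
    refine le_of_eq (Finset.sum_congr rfl fun j _ => ?_)
    rw [norm_mul, Complex.norm_real, Real.norm_eq_abs, abs_of_nonneg (hA i j)]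
  obtain ⟨B, hBpos, hBA⟩ := exists_posB hA hirr
  have humain : ∀ w : Fin n → ℝ, (∀ i, 0 ≤ w i) → (∃ j, 0 < w j) → ∀ i, 0 < (B *ᵥ w) i := by
    intro w hw ⟨j, hj⟩ i
    simp only [Matrix.mulVec, dotProduct]
    exact Finset.sum_pos' (fun l _ => mul_nonneg (hBpos i l).le (hw l))
      ⟨j, Finset.mem_univ j, mul_pos (hBpos i j) hj⟩
  set u : Fin n → ℝ := B *ᵥ z with hu
  have hupos : ∀ i, 0 < u i := humain z hznn ⟨j₀, hzj₀⟩
  have hcomm : A *ᵥ u = B *ᵥ (A *ᵥ z) := by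
    rw [hu, Matrix.mulVec_mulVec, Matrix.mulVec_mulVec, hBA]
  by_cases hcase : A *ᵥ z = r • z
  · refine ⟨u, hupos, ?_⟩
    rw [hcomm, hcase, Matrix.mulVec_smul, hu]
  · exfalso
    set w : Fin n → ℝ := A *ᵥ z - r • z with hw
    have hwnn : ∀ i, 0 ≤ w i := fun i => by
      simp only [hw, Pi.sub_apply, Pi.smul_apply, smul_eq_mul, sub_nonneg]; exact hsub i
    have hwne : ∃ j, 0 < w j := by
      by_contra hcon
      push_neg at hcon
      apply hcase
      funext i
      have h0 : (A *ᵥ z) i - (r • z) i = 0 := le_antisymm (hcon i) (hwnn i)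
      simpa [sub_eq_zero] using h0
    have hstrict : ∀ i, r * u i < (A *ᵥ u) i := by
      intro i
      have h3 : (A *ᵥ u) i - r * u i = (B *ᵥ w) i := by
        rw [hcomm, hw, Matrix.mulVec_sub, Matrix.mulVec_smul, hu]
        simp
      have h4 : 0 < (B *ᵥ w) i := humain w hwnn hwne i
      linarith
    set lam : ℝ := Finset.univ.inf' (Finset.univ_nonempty_iff.2 ⟨j₀⟩) (fun i => (A *ᵥ u) i / u i)
      with hlam
    have hlamgt : r < lam := by
      rw [hlam, Finset.lt_inf'_iff]
      intro i _
      rw [lt_div_iff₀ (hupos i)]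
      exact hstrict i
    have hlamle : ∀ i, lam * u i ≤ (A *ᵥ u) i := by
      intro i
      have hle : lam ≤ (A *ᵥ u) i / u i := Finset.inf'_le _ (Finset.mem_univ i)
      calc lam * u i ≤ ((A *ᵥ u) i / u i) * u i :=
        mul_le_mul_of_nonneg_right hle (hupos i).le
        _ = (A *ᵥ u) i := div_mul_cancel₀ _ (hupos i).ne'
    exact absurd (cw_upper hn hA hupos (le_trans hr0 hlamgt.le) hlamle)
      (not_le.2 hlamgt)
lemma real_eig_mem {A : Matrix (Fin n) (Fin n) ℝ} {x : Fin n → ℝ} {rr : ℝ}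
    (hx : x ≠ 0) (h : A *ᵥ x = rr • x) : (rr : ℂ) ∈ spectrum ℂ (A.map Complex.ofReal) := by
  refine spec_iff.2 ⟨fun i => (x i : ℂ), ?_, ?_⟩
  · intro h0
    apply hx; funext i
    have := congrFun h0 i
    simpa using this
  · rw [map_mulVec_ofReal, h]
    funext i; simp

lemma matIrred'_transpose {A : Matrix (Fin n) (Fin n) ℝ} (h : MatIrred A) : MatIrred Aᵀ := by
  intro i j
  obtain ⟨k, hk, hpos⟩ := h j i
  exact ⟨k, hk, by rw [← Matrix.transpose_pow]; rwa [Matrix.transpose_apply]⟩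

lemma spectrum_transpose (M : Matrix (Fin n) (Fin n) ℂ) :
    spectrum ℂ Mᵀ = spectrum ℂ M := by
  ext μ
  rw [spectrum.mem_iff, spectrum.mem_iff, not_iff_not]
  have h1 : (algebraMap ℂ (Matrix (Fin n) (Fin n) ℂ) μ) - Mᵀ
      = ((algebraMap ℂ (Matrix (Fin n) (Fin n) ℂ) μ) - M)ᵀ := by
    rw [Matrix.transpose_sub]
    congr 1
    rw [Matrix.algebraMap_eq_diagonal, Matrix.diagonal_transpose]
  rw [h1, Matrix.isUnit_iff_isUnit_det, Matrix.isUnit_iff_isUnit_det, Matrix.det_transpose]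

lemma specRad_transpose (A : Matrix (Fin n) (Fin n) ℝ) : specRad Aᵀ = specRad A := by
  unfold specRad
  have h1 : (Aᵀ).map Complex.ofReal = (A.map Complex.ofReal)ᵀ := rfl
  rw [h1, spectrum_transpose]

lemma dot_mulVec_eq (y x : Fin n → ℝ) (A : Matrix (Fin n) (Fin n) ℝ) :
    y ⬝ᵥ (A *ᵥ x) = (Aᵀ *ᵥ y) ⬝ᵥ x := by
  rw [dotProduct_mulVec, Matrix.mulVec_transpose]
lemma combin (hn : 2 ≤ n) {A : Matrix (Fin n) (Fin n) ℝ}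
    (h01 : ∀ i j, A i j = 0 ∨ A i j = 1) (hirr : MatIrred A)
    {m : Fin n → ℝ} (hm_pos : ∀ i, 0 < m i)
    (hrow : ∀ i : Fin n, ∃ j, A i j = 1)
    {c : ℝ} (hc : 0 < c) (harc : ∀ i j, A i j = 1 → m i * m j = c) :
    (∀ i j, m i = m j) ∨
      ∃ U W : Set (Fin n), U.Nonempty ∧ W.Nonempty ∧ U ∪ W = Set.univ ∧ Disjoint U W ∧
        (∀ i j, (i ∈ U ∧ j ∈ U) ∨ (i ∈ W ∧ j ∈ W) → A i j = 0) ∧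
        (∀ i ∈ U, ∀ j ∈ U, m i = m j) ∧ (∀ i ∈ W, ∀ j ∈ W, m i = m j) := by
  have hA : ∀ i j, 0 ≤ A i j := fun i j => by rcases h01 i j with h | h <;> rw [h] <;> norm_num
  have i₀ : Fin n := ⟨0, by omega⟩
  set t : ℝ := m i₀ with ht
  have ht0 : 0 < t := hm_pos i₀
  have step : ∀ i j, A i j = 1 → m j = c / m i := by
    intro i j hij
    rw [eq_div_iff (ne_of_gt (hm_pos i)), mul_comm]
    exact harc i j hij
  set P : Set (Fin n) := {x | m x = t ∨ m x = c / t} with hP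
  have harcP : ∀ i ∈ P, ∀ j, A i j = 1 → j ∈ P := by
    intro i hi j hij
    rcases hi with h | h
    · right; rw [step i j hij, h]
    · left
      rw [step i j hij, h, div_div_eq_mul_div, mul_comm c t, mul_div_assoc,
        div_self (ne_of_gt hc), mul_one]
  have powP : ∀ (k : ℕ) (i j : Fin n), i ∈ P → 0 < (A ^ k) i j → j ∈ P := by
    intro k
    induction k with
    | zero =>
      intro i j hi hpos
      rw [pow_zero] at hpos
      by_cases h : i = j
      · rwa [← h]
      · rw [Matrix.one_apply_ne h] at hpos; exact absurd hpos (lt_irrefl 0)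
    | succ k ih =>
      intro i j hi hpos
      rw [pow_succ, Matrix.mul_apply] at hpos
      obtain ⟨l, hl⟩ : ∃ l, 0 < (A ^ k) i l * A l j := by
        by_contra hcon
        push_neg at hcon
        have : ∑ l, (A ^ k) i l * A l j = 0 := le_antisymm
          (Finset.sum_nonpos fun l _ => hcon l)
          (Finset.sum_nonneg fun l _ => mul_nonneg (pow_nonneg_entries hA k i l) (hA l j))
        rw [this] at hpos; exact absurd hpos (lt_irrefl 0)
      have h1 : 0 < (A ^ k) i l := by
        rcases lt_or_eq_of_le (pow_nonneg_entries hA k i l) with h | h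
        · exact h
        · rw [← h, zero_mul] at hl; exact absurd hl (lt_irrefl 0)
      have h2 : A l j = 1 := by
        rcases h01 l j with h | h
        · rw [h, mul_zero] at hl; exact absurd hl (lt_irrefl 0)
        · exact h
      exact harcP l (ih i l hi h1) j h2
  have allP : ∀ j, j ∈ P := by
    intro j
    obtain ⟨k, _, hpos⟩ := hirr i₀ j
    exact powP k i₀ j (Or.inl rfl) hpos
  by_cases htc : t * t = c
  · left
    have hval : ∀ x, m x = t := by
      intro x
      rcases allP x with h | h
      · exact h
      · rw [h, ← htc]; field_simp
    intro i j; rw [hval i, hval j]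
  · right
    have htne : t ≠ c / t := by
      intro h
      apply htc
      calc t * t = (c / t) * t := by rw [← h]
        _ = c := div_mul_cancel₀ _ (ne_of_gt ht0)
    refine ⟨{x | m x = t}, {x | m x = c / t}, ⟨i₀, rfl⟩, ?_, ?_, ?_, ?_, ?_, ?_⟩
    · obtain ⟨j, hj⟩ := hrow i₀
      exact ⟨j, by rw [Set.mem_setOf_eq, step i₀ j hj]⟩
    · apply Set.eq_univ_of_forall
      intro x
      rcases allP x with h | h
      · exact Or.inl h
      · exact Or.inr h
    · rw [Set.disjoint_left]
      intro x hx hx'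
      rw [Set.mem_setOf_eq] at hx hx'
      exact htne (hx ▸ hx')
    · rintro i j (⟨hi, hj⟩ | ⟨hi, hj⟩)
      · rcases h01 i j with h | h
        · exact h
        · exfalso
          apply htc
          have := harc i j h
          rw [Set.mem_setOf_eq] at hi hj
          rw [hi, hj] at this
          exact this
      · rcases h01 i j with h | h
        · exact h
        · exfalso
          apply htc
          have h5 := harc i j h
          rw [Set.mem_setOf_eq] at hi hj
          rw [hi, hj] at h5
          have hc0 : c ≠ 0 := ne_of_gt hc
          have ht0' : t ≠ 0 := ne_of_gt ht0
          have h6 : c * c = c * (t * t) := by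
            calc c * c = c / t * (c / t) * (t * t) := by
                  rw [div_mul_div_comm, div_mul_cancel₀ _ (mul_ne_zero ht0' ht0')]
              _ = c * (t * t) := by rw [h5]
          exact (mul_left_cancel₀ hc0 h6).symm
    · intro i hi j hj
      rw [Set.mem_setOf_eq] at hi hj; rw [hi, hj]
    · intro i hi j hj
      rw [Set.mem_setOf_eq] at hi hj; rw [hi, hj]
theorem stmt_13 {n : ℕ} (hn : 2 ≤ n) (A : Matrix (Fin n) (Fin n) ℝ)
    (h01 : ∀ i j, A i j = 0 ∨ A i j = 1) (hdiag : ∀ i, A i i = 0) (hirr : MatIrred A)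
    (d m : Fin n → ℝ) (hd : ∀ i, d i = ∑ j, A i j)
    (hm : ∀ i, m i = (∑ j, A i j * d j) / d i) :
    (sInf {x | ∃ i j, A i j = 1 ∧ x = Real.sqrt (m i * m j)} ≤ specRad A ∧
      specRad A ≤ sSup {x | ∃ i j, A i j = 1 ∧ x = Real.sqrt (m i * m j)}) ∧
    ((specRad A = sInf {x | ∃ i j, A i j = 1 ∧ x = Real.sqrt (m i * m j)} ∨
      specRad A = sSup {x | ∃ i j, A i j = 1 ∧ x = Real.sqrt (m i * m j)}) ↔
      ((∀ i j, m i = m j) ∨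
        ∃ U W : Set (Fin n), U.Nonempty ∧ W.Nonempty ∧ U ∪ W = Set.univ ∧ Disjoint U W ∧
          (∀ i j, (i ∈ U ∧ j ∈ U) ∨ (i ∈ W ∧ j ∈ W) → A i j = 0) ∧
          (∀ i ∈ U, ∀ j ∈ U, m i = m j) ∧ (∀ i ∈ W, ∀ j ∈ W, m i = m j))) := by
  have hn0 : 0 < n := by omega
  have hA : ∀ i j, 0 ≤ A i j := fun i j => by rcases h01 i j with h | h <;> rw [h] <;> norm_num
  have hrow : ∀ i : Fin n, ∃ j, A i j = 1 := by
    intro i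
    obtain ⟨k, hk, hpos⟩ := hirr i i
    obtain ⟨k', rfl⟩ : ∃ k', k = k' + 1 := ⟨k - 1, by omega⟩
    rw [pow_succ', Matrix.mul_apply] at hpos
    by_contra hcon
    push_neg at hcon
    have hz : ∀ l, A i l = 0 := fun l => (h01 i l).resolve_right (hcon l)
    simp only [hz, zero_mul, Finset.sum_const_zero] at hpos
    exact absurd hpos (lt_irrefl 0)
  have hd_pos : ∀ i, 0 < d i := by
    intro i
    obtain ⟨j, hj⟩ := hrow i
    rw [hd i]
    exact Finset.sum_pos' (fun l _ => hA i l) ⟨j, Finset.mem_univ j, by rw [hj]; norm_num⟩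
  have hm_pos : ∀ i, 0 < m i := by
    intro i
    rw [hm i]
    refine div_pos ?_ (hd_pos i)
    obtain ⟨j, hj⟩ := hrow i
    exact Finset.sum_pos' (fun l _ => mul_nonneg (hA i l) (hd_pos l).le)
      ⟨j, Finset.mem_univ j, by rw [hj, one_mul]; exact hd_pos j⟩
  have hAdsum : ∀ i, ∑ j, A i j * d j = d i * m i := by
    intro i
    rw [hm i, mul_div_cancel₀ _ (ne_of_gt (hd_pos i))]
  have hAd : A *ᵥ d = fun j => d j * m j := by
    funext i
    simp only [Matrix.mulVec, dotProduct]
    exact hAdsum i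
  set S : Set ℝ := {x | ∃ i j, A i j = 1 ∧ x = Real.sqrt (m i * m j)} with hS
  have hSfin : S.Finite := by
    refine Set.Finite.subset (Set.finite_univ.image
      (fun p : Fin n × Fin n => Real.sqrt (m p.1 * m p.2))) ?_
    rintro x ⟨i, j, _, rfl⟩
    exact ⟨(i, j), Set.mem_univ _, rfl⟩
  have hSne : S.Nonempty := by
    obtain ⟨j, hj⟩ := hrow ⟨0, hn0⟩
    exact ⟨_, ⟨0, hn0⟩, j, hj, rfl⟩
  set N : ℝ := sInf S with hN
  set M : ℝ := sSup S with hM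
  have hNmem : N ∈ S := hSne.csInf_mem hSfin
  have hMmem : M ∈ S := hSne.csSup_mem hSfin
  have hNpos : 0 < N := by
    obtain ⟨i, j, _, h⟩ := hNmem
    rw [h]
    exact Real.sqrt_pos.2 (mul_pos (hm_pos i) (hm_pos j))
  have hMpos : 0 < M := by
    obtain ⟨i, j, _, h⟩ := hMmem
    rw [h]
    exact Real.sqrt_pos.2 (mul_pos (hm_pos i) (hm_pos j))
  have harc_sq : ∀ i j, A i j = 1 → N^2 ≤ m i * m j ∧ m i * m j ≤ M^2 := by
    intro i j h
    have h1 : N ≤ Real.sqrt (m i * m j) := csInf_le hSfin.bddBelow ⟨i, j, h, rfl⟩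
    have h2 : Real.sqrt (m i * m j) ≤ M := le_csSup hSfin.bddAbove ⟨i, j, h, rfl⟩
    have hnn : 0 ≤ m i * m j := (mul_pos (hm_pos i) (hm_pos j)).le
    have hs := Real.sq_sqrt hnn
    have hsn := Real.sqrt_nonneg (m i * m j)
    constructor <;> nlinarith
  have hterm_up : ∀ i j, A i j * (d j * m j) ≤ A i j * (d j * (M^2 / m i)) := by
    intro i j
    rcases h01 i j with h | h
    · rw [h]; simp
    · rw [h, one_mul, one_mul]
      refine mul_le_mul_of_nonneg_left ?_ (hd_pos j).le
      rw [le_div_iff₀ (hm_pos i), mul_comm]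
      exact (harc_sq i j h).2
  have hterm_lo : ∀ i j, A i j * (d j * (N^2 / m i)) ≤ A i j * (d j * m j) := by
    intro i j
    rcases h01 i j with h | h
    · rw [h]; simp
    · rw [h, one_mul, one_mul]
      refine mul_le_mul_of_nonneg_left ?_ (hd_pos j).le
      rw [div_le_iff₀ (hm_pos i), mul_comm]
      exact (harc_sq i j h).1
  have hAAd : ∀ i, (A *ᵥ (A *ᵥ d)) i = ∑ j, A i j * (d j * m j) := by
    intro i
    rw [hAd]
    simp only [Matrix.mulVec, dotProduct]
  have hconst_sum : ∀ (c : ℝ) (i : Fin n), ∑ j, A i j * (d j * (c / m i)) = c * d i := by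
    intro c i
    have h1 : ∑ j, A i j * (d j * (c / m i)) = (c / m i) * ∑ j, A i j * d j := by
      rw [Finset.mul_sum]
      refine Finset.sum_congr rfl fun j _ => by ring
    rw [h1, hAdsum i]
    field_simp [ne_of_gt (hm_pos i)]
    try ring
  have hkey_up : ∀ i, (A *ᵥ (A *ᵥ d)) i ≤ M^2 * d i := by
    intro i
    rw [hAAd i, ← hconst_sum (M^2) i]
    exact Finset.sum_le_sum fun j _ => hterm_up i j
  have hkey_lo : ∀ i, N^2 * d i ≤ (A *ᵥ (A *ᵥ d)) i := by
    intro i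
    rw [hAAd i, ← hconst_sum (N^2) i]
    exact Finset.sum_le_sum fun j _ => hterm_lo i j
  obtain ⟨y, hy, hyeq⟩ := perron hn0 (A := Aᵀ) (fun i j => hA j i) (matIrred'_transpose hirr)
  rw [specRad_transpose] at hyeq
  set r : ℝ := specRad A with hr
  have hr0 : 0 ≤ r := by
    obtain ⟨μ, _, hμ⟩ := specRad_mem hn0 A
    rw [hr, hμ]
    positivity
  have hpair : ∀ x : Fin n → ℝ, y ⬝ᵥ (A *ᵥ x) = r * (y ⬝ᵥ x) := by
    intro x
    rw [dot_mulVec_eq, hyeq, smul_dotProduct, smul_eq_mul]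
  have hyd : 0 < y ⬝ᵥ d :=
    Finset.sum_pos (fun i _ => mul_pos (hy i) (hd_pos i)) ⟨⟨0, hn0⟩, Finset.mem_univ _⟩
  have hyAAd : y ⬝ᵥ (A *ᵥ (A *ᵥ d)) = r^2 * (y ⬝ᵥ d) := by
    rw [hpair, hpair]; ring
  have hdotle : ∀ (v w : Fin n → ℝ), (∀ i, v i ≤ w i) → y ⬝ᵥ v ≤ y ⬝ᵥ w := by
    intro v w h
    exact Finset.sum_le_sum fun i _ => mul_le_mul_of_nonneg_left (h i) (hy i).le
  have hydc : ∀ c : ℝ, y ⬝ᵥ (fun i => c * d i) = c * (y ⬝ᵥ d) := by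
    intro c
    simp only [dotProduct, Finset.mul_sum]
    refine Finset.sum_congr rfl fun i _ => by ring
  have hup2 : r^2 ≤ M^2 := by
    have h1 : y ⬝ᵥ (A *ᵥ (A *ᵥ d)) ≤ y ⬝ᵥ (fun i => M^2 * d i) := hdotle _ _ hkey_up
    rw [hyAAd, hydc] at h1
    exact le_of_mul_le_mul_right h1 hyd
  have hlo2 : N^2 ≤ r^2 := by
    have h1 : y ⬝ᵥ (fun i => N^2 * d i) ≤ y ⬝ᵥ (A *ᵥ (A *ᵥ d)) := hdotle _ _ hkey_lo
    rw [hyAAd, hydc] at h1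
    exact le_of_mul_le_mul_right h1 hyd
  have hNr : N ≤ r := by nlinarith
  have hrM : r ≤ M := by nlinarith
  refine ⟨⟨hNr, hrM⟩, ?_⟩
  constructor
  · -- equality implies structure
    intro hor
    have harc_const : ∃ c : ℝ, 0 < c ∧ ∀ i j, A i j = 1 → m i * m j = c := by
      rcases hor with heq | heq
      · -- r = N
        refine ⟨N^2, by positivity, ?_⟩
        have hall : ∀ i, (A *ᵥ (A *ᵥ d)) i = N^2 * d i := by
          have hsum_eq : y ⬝ᵥ (fun i => N^2 * d i) = y ⬝ᵥ (A *ᵥ (A *ᵥ d)) := by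
            rw [hyAAd, hydc, ← heq]
          have h2 := (Finset.sum_eq_sum_iff_of_le
            (fun i (_ : i ∈ Finset.univ) =>
              mul_le_mul_of_nonneg_left (hkey_lo i) (hy i).le)).1 hsum_eq
          intro i
          exact (mul_left_cancel₀ (ne_of_gt (hy i)) (h2 i (Finset.mem_univ i))).symm
        intro i j hij
        have h3 : ∑ l, A i l * (d l * (N^2 / m i)) = ∑ l, A i l * (d l * m l) := by
          rw [hconst_sum, ← hAAd, hall]
        have h4 := (Finset.sum_eq_sum_iff_of_le
          (fun l (_ : l ∈ Finset.univ) => hterm_lo i l)).1 h3 j (Finset.mem_univ j)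
        rw [hij, one_mul, one_mul] at h4
        have h5 := mul_left_cancel₀ (ne_of_gt (hd_pos j)) h4
        rw [← h5]
        field_simp [ne_of_gt (hm_pos i)]
        try ring
      · -- r = M
        refine ⟨M^2, by positivity, ?_⟩
        have hall : ∀ i, (A *ᵥ (A *ᵥ d)) i = M^2 * d i := by
          have hsum_eq : y ⬝ᵥ (A *ᵥ (A *ᵥ d)) = y ⬝ᵥ (fun i => M^2 * d i) := by
            rw [hyAAd, hydc, ← heq]
          have h2 := (Finset.sum_eq_sum_iff_of_le
            (fun i (_ : i ∈ Finset.univ) =>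
              mul_le_mul_of_nonneg_left (hkey_up i) (hy i).le)).1 hsum_eq
          intro i
          exact mul_left_cancel₀ (ne_of_gt (hy i)) (h2 i (Finset.mem_univ i))
        intro i j hij
        have h3 : ∑ l, A i l * (d l * m l) = ∑ l, A i l * (d l * (M^2 / m i)) := by
          rw [hconst_sum, ← hAAd, hall]
        have h4 := (Finset.sum_eq_sum_iff_of_le
          (fun l (_ : l ∈ Finset.univ) => hterm_up i l)).1 h3 j (Finset.mem_univ j)
        rw [hij, one_mul, one_mul] at h4
        have h5 := mul_left_cancel₀ (ne_of_gt (hd_pos j)) h4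
        rw [h5]
        field_simp [ne_of_gt (hm_pos i)]
        try ring
    obtain ⟨c, hc, harc⟩ := harc_const
    exact combin hn h01 hirr hm_pos hrow hc harc
  · -- structure implies equality
    intro hcond
    have harc_const : ∃ ρ : ℝ, ∀ i j, A i j = 1 → Real.sqrt (m i * m j) = ρ := by
      rcases hcond with hall | ⟨U, W, ⟨u₀, hu₀⟩, ⟨w₀, hw₀⟩, hUW, hdisj, hzero, hconstU, hconstW⟩
      · refine ⟨Real.sqrt (m ⟨0, hn0⟩ * m ⟨0, hn0⟩), fun i j _ => ?_⟩
        rw [hall i ⟨0, hn0⟩, hall j ⟨0, hn0⟩]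
      · refine ⟨Real.sqrt (m u₀ * m w₀), fun i j hij => ?_⟩
        have hmem : ∀ x : Fin n, x ∈ U ∨ x ∈ W := by
          intro x
          have := Set.eq_univ_iff_forall.1 hUW x
          exact this
        rcases hmem i with hi | hi
        · have hj : j ∈ W := by
            rcases hmem j with hj | hj
            · exact absurd hij (by rw [hzero i j (Or.inl ⟨hi, hj⟩)]; norm_num)
            · exact hj
          rw [hconstU i hi u₀ hu₀, hconstW j hj w₀ hw₀]
        · have hj : j ∈ U := by
            rcases hmem j with hj | hj
            · exact hj
            · exact absurd hij (by rw [hzero i j (Or.inr ⟨hi, hj⟩)]; norm_num)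
          rw [hconstW i hi w₀ hw₀, hconstU j hj u₀ hu₀, mul_comm]
    obtain ⟨ρ, hρarc⟩ := harc_const
    have hSsing : S = {ρ} := by
      apply Set.eq_singleton_iff_nonempty_unique_mem.2
      refine ⟨hSne, ?_⟩
      rintro x ⟨i, j, hij, rfl⟩
      exact hρarc i j hij
    have hρpos : 0 < ρ := by
      obtain ⟨i, j, hij, hx⟩ := hNmem
      rw [← hρarc i j hij]
      exact Real.sqrt_pos.2 (mul_pos (hm_pos i) (hm_pos j))
    have hNρ : N = ρ := by rw [hN, hSsing, csInf_singleton]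
    have hMρ : M = ρ := by rw [hM, hSsing, csSup_singleton]
    -- eigenvector
    set x : Fin n → ℝ := fun i => d i * Real.sqrt (m i) with hx
    have hxpos : ∀ i, 0 < x i := fun i =>
      mul_pos (hd_pos i) (Real.sqrt_pos.2 (hm_pos i))
    have hxne : x ≠ 0 := by
      intro h0
      have := congrFun h0 ⟨0, hn0⟩
      exact absurd this (ne_of_gt (hxpos ⟨0, hn0⟩))
    have heig : A *ᵥ x = ρ • x := by
      funext i
      have hsqi : 0 < Real.sqrt (m i) := Real.sqrt_pos.2 (hm_pos i)
      have hterm : ∀ j, A i j * (d j * Real.sqrt (m j)) = A i j * (d j * (ρ / Real.sqrt (m i))) := by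
        intro j
        rcases h01 i j with h | h
        · rw [h]; ring
        · rw [h, one_mul, one_mul]
          congr 1
          rw [eq_div_iff (ne_of_gt hsqi), mul_comm, ← Real.sqrt_mul (hm_pos i).le]
          exact hρarc i j h
      have h1 : (A *ᵥ x) i = ∑ j, A i j * (d j * Real.sqrt (m j)) := by
        simp only [Matrix.mulVec, dotProduct, hx]
      rw [h1]
      calc ∑ j, A i j * (d j * Real.sqrt (m j))
          = ∑ j, A i j * (d j * (ρ / Real.sqrt (m i))) :=
            Finset.sum_congr rfl fun j _ => hterm j
        _ = (ρ / Real.sqrt (m i)) * ∑ j, A i j * d j := by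
            rw [Finset.mul_sum]
            exact Finset.sum_congr rfl fun j _ => by ring
        _ = ρ * (d i * Real.sqrt (m i)) := by
            rw [hAdsum i]
            have hds : m i / Real.sqrt (m i) = Real.sqrt (m i) := Real.div_sqrt
            calc (ρ / Real.sqrt (m i)) * (d i * m i)
                = ρ * (d i * (m i / Real.sqrt (m i))) := by ring
              _ = ρ * (d i * Real.sqrt (m i)) := by rw [hds]
        _ = (ρ • x) i := by simp [hx, smul_eq_mul]
    have hmemspec := real_eig_mem hxne heig
    have hle := abs_le_specRad hmemspec
    rw [Complex.norm_real, Real.norm_eq_abs, abs_of_pos hρpos] at hle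
    have hreq : r = ρ := le_antisymm (hMρ ▸ hrM) hle
    left
    show r = N
    rw [hNρ]
    exact hreq
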